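/- Let t be a well-typed linear λ-term over a finite set X of simply typed variables, let x ∈ X and let σ be a simple type. Then the edge set of the tree t can be partitioned into kept edges and cut edges so that: (1) every edge lying on the tree path from the application node of an x-redex of type σ to the variable node it binds is kept, hence every full x-redex of type σ is entirely contained in a single connected component of the forest of kept edges; and (2) within each connected component, every node having at least two of its children in the same component is the application node of an x-redex of type σ; in particular each component, viewed as a λ-term with ports at the cut edges, is thin. -/
import Mathlib


/-- Simple types: τ ::= o | τ → τ. -/
inductive Ty : Type
  | o : Ty
  | arrow : Ty → Ty → Ty
deriving DecidableEq

/-- Simply typed λ-terms over a set `V` of variables (each variable carries a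
fixed simple type, given by a function `tyOf : V → Ty`). -/
inductive Tm (V : Type) : Type
  | var : V → Tm V
  | lam : V → Tm V → Tm V
  | app : Tm V → Tm V → Tm V

/-- Typing relation: `x : tyOf x`; `λx.M : σ → τ` when `x : σ` and `M : τ`;
`M N : τ` when `M : σ → τ` and `N : σ`. -/
inductive HasTy {V : Type} (tyOf : V → Ty) : Tm V → Ty → Prop
  | var (x : V) : HasTy tyOf (Tm.var x) (tyOf x)
  | lam (x : V) {M : Tm V} {τ : Ty} :
      HasTy tyOf M τ → HasTy tyOf (Tm.lam x M) (Ty.arrow (tyOf x) τ)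
  | app {M N : Tm V} {σ τ : Ty} :
      HasTy tyOf M (Ty.arrow σ τ) → HasTy tyOf N σ → HasTy tyOf (Tm.app M N) τ

/-- Number of free occurrences of the variable `x`. -/
def freeCount {V : Type} [DecidableEq V] (x : V) : Tm V → ℕ
  | Tm.var y => if y = x then 1 else 0
  | Tm.lam y M => if y = x then 0 else freeCount x M
  | Tm.app M N => freeCount x M + freeCount x N

/-- Nodes of a term (viewed as a tree) are addressed by lists of directions:
`false` goes to the (left or unique) child, `true` to the right child.
`subtermAt t p` is the subterm rooted at the node `p`, if `p` is a node. -/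
def subtermAt {V : Type} : Tm V → List Bool → Option (Tm V)
  | t, [] => some t
  | Tm.lam _ M, false :: p => subtermAt M p
  | Tm.app M _, false :: p => subtermAt M p
  | Tm.app _ N, true :: p => subtermAt N p
  | _, _ => none

/-- A λ-term is linear if every free variable occurs exactly once (in
particular at most once) and every abstraction `λx` binds exactly one
occurrence of `x`. -/
def Linear {V : Type} [DecidableEq V] (t : Tm V) : Prop :=
  (∀ x : V, freeCount x t ≤ 1) ∧
  (∀ (p : List Bool) (x : V) (N : Tm V),
    subtermAt t p = some (Tm.lam x N) → freeCount x N = 1)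

/-- `FreeOccAt x M r`: the node `r` of `M` is a free occurrence of the
variable `x` (no abstraction `λx` lies strictly above it in `M`). -/
def FreeOccAt {V : Type} (x : V) (M : Tm V) (r : List Bool) : Prop :=
  subtermAt M r = some (Tm.var x) ∧
  ∀ q : List Bool, q <+: r → q ≠ r →
    ∀ M' : Tm V, subtermAt M q ≠ some (Tm.lam x M')

section Aux
variable {V : Type}

lemma subtermAt_append (t : Tm V) (a b : List Bool) :
    subtermAt t (a ++ b) = (subtermAt t a).bind (fun s => subtermAt s b) := by
  induction a generalizing t with
  | nil => simp [subtermAt]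
  | cons c a ih =>
    cases t with
    | var y => cases c <;> simp [subtermAt]
    | lam y M => cases c <;> simp [subtermAt, ih]
    | app M N => cases c <;> simp [subtermAt, ih]

lemma freeOcc_var {x y : V} {r : List Bool} (h : FreeOccAt x (Tm.var y) r) :
    r = [] ∧ y = x := by
  obtain ⟨h1, _⟩ := h
  cases r with
  | nil =>
    refine ⟨rfl, ?_⟩
    simp [subtermAt] at h1
    exact h1
  | cons c r => cases c <;> simp [subtermAt] at h1

lemma freeOcc_lam {x y : V} {M : Tm V} {r : List Bool}
    (h : FreeOccAt x (Tm.lam y M) r) :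
    ∃ r', r = false :: r' ∧ y ≠ x ∧ FreeOccAt x M r' := by
  obtain ⟨h1, h2⟩ := h
  cases r with
  | nil => simp [subtermAt] at h1
  | cons c r' =>
    cases c with
    | true => simp [subtermAt] at h1
    | false =>
      refine ⟨r', rfl, ?_, ?_, ?_⟩
      · rintro rfl
        exact h2 [] (List.nil_prefix) (by simp) M (by simp [subtermAt])
      · exact h1
      · intro q hq hne M' hM'
        exact h2 (false :: q) (List.cons_prefix_cons.mpr ⟨rfl, hq⟩)
          (by simpa using hne) M' (by simpa [subtermAt] using hM')

lemma freeOcc_app {x : V} {M N : Tm V} {r : List Bool}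
    (h : FreeOccAt x (Tm.app M N) r) :
    (∃ r', r = false :: r' ∧ FreeOccAt x M r') ∨
    (∃ r', r = true :: r' ∧ FreeOccAt x N r') := by
  obtain ⟨h1, h2⟩ := h
  cases r with
  | nil => simp [subtermAt] at h1
  | cons c r' =>
    cases c with
    | false =>
      refine Or.inl ⟨r', rfl, h1, ?_⟩
      intro q hq hne M' hM'
      exact h2 (false :: q) (List.cons_prefix_cons.mpr ⟨rfl, hq⟩)
        (by simpa using hne) M' (by simpa [subtermAt] using hM')
    | true =>
      refine Or.inr ⟨r', rfl, h1, ?_⟩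
      intro q hq hne M' hM'
      exact h2 (true :: q) (List.cons_prefix_cons.mpr ⟨rfl, hq⟩)
        (by simpa using hne) M' (by simpa [subtermAt] using hM')

lemma one_le_freeCount [DecidableEq V] {x : V} {M : Tm V} {r : List Bool}
    (h : FreeOccAt x M r) : 1 ≤ freeCount x M := by
  induction M generalizing r with
  | var y => obtain ⟨_, rfl⟩ := freeOcc_var h; simp [freeCount]
  | lam y M ih =>
    obtain ⟨r', rfl, hyx, h'⟩ := freeOcc_lam h
    simpa [freeCount, hyx] using ih h'
  | app M N ihM ihN =>
    rcases freeOcc_app h with ⟨r', rfl, h'⟩ | ⟨r', rfl, h'⟩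
    · have := ihM h'; simp [freeCount]; omega
    · have := ihN h'; simp [freeCount]; omega

lemma two_le_freeCount [DecidableEq V] {x : V} {M : Tm V} {r₁ r₂ : List Bool}
    (h₁ : FreeOccAt x M r₁) (h₂ : FreeOccAt x M r₂) (hne : r₁ ≠ r₂) :
    2 ≤ freeCount x M := by
  induction M generalizing r₁ r₂ with
  | var y =>
    obtain ⟨rfl, _⟩ := freeOcc_var h₁
    obtain ⟨rfl, _⟩ := freeOcc_var h₂
    exact absurd rfl hne
  | lam y M ih =>
    obtain ⟨s₁, rfl, hyx, h₁'⟩ := freeOcc_lam h₁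
    obtain ⟨s₂, rfl, _, h₂'⟩ := freeOcc_lam h₂
    have : s₁ ≠ s₂ := fun h => hne (by rw [h])
    simpa [freeCount, hyx] using ih h₁' h₂' this
  | app M N ihM ihN =>
    rcases freeOcc_app h₁ with ⟨s₁, rfl, h₁'⟩ | ⟨s₁, rfl, h₁'⟩ <;>
      rcases freeOcc_app h₂ with ⟨s₂, rfl, h₂'⟩ | ⟨s₂, rfl, h₂'⟩
    · have : s₁ ≠ s₂ := fun h => hne (by rw [h])
      have := ihM h₁' h₂' this; simp [freeCount]; omega
    · have := one_le_freeCount h₁'; have := one_le_freeCount h₂'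
      simp [freeCount]; omega
    · have := one_le_freeCount h₁'; have := one_le_freeCount h₂'
      simp [freeCount]; omega
    · have : s₁ ≠ s₂ := fun h => hne (by rw [h])
      have := ihN h₁' h₂' this; simp [freeCount]; omega

/-- Decompose the position of an edge lying on a redex path. -/
lemma path_decomp {q p r : List Bool} {c : Bool}
    (h1 : q <+: p ++ [c]) (h2 : p ++ [c] <+: q ++ false :: false :: r)
    (h3 : p ++ [c] ≠ q) :
    (p = q ∧ c = false) ∨ (p = q ++ [false] ∧ c = false) ∨
    ∃ r₀, p = q ++ false :: false :: r₀ ∧ r₀ ++ [c] <+: r := by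
  obtain ⟨w, hw⟩ := h1
  have hwpre : w <+: false :: false :: r := by
    have : q ++ w <+: q ++ false :: false :: r := hw ▸ h2
    exact (List.prefix_append_right_inj q).mp this
  rcases w with _ | ⟨b, w'⟩
  · simp at hw; exact absurd hw.symm h3
  · obtain ⟨hb, hw'pre⟩ := List.cons_prefix_cons.mp hwpre
    subst hb
    rcases w' with _ | ⟨b', w''⟩
    · -- q ++ [false] = p ++ [c]
      have := List.append_inj' hw rfl
      obtain ⟨hq, hc⟩ := this
      left
      exact ⟨hq.symm, by injection hc with h; exact h.symm⟩
    · obtain ⟨hb', hw''pre⟩ := List.cons_prefix_cons.mp hw'pre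
      subst hb'
      rcases List.eq_nil_or_concat w'' with rfl | ⟨w₃, cl, rfl⟩
      · -- q ++ [false, false] = p ++ [c]
        have := List.append_inj' (show (q ++ [false]) ++ [false] = p ++ [c] by
          simpa using hw) rfl
        obtain ⟨hq, hc⟩ := this
        right; left
        exact ⟨hq.symm, by injection hc with h; exact h.symm⟩
      · have heq : (q ++ false :: false :: w₃) ++ [cl] = p ++ [c] := by
          simpa using hw
        obtain ⟨hq, hc⟩ := List.append_inj' heq rfl
        right; right
        refine ⟨w₃, hq.symm, ?_⟩
        have hcl : cl = c := by injection hc with h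
        have : w₃ ++ [cl] <+: r := by simpa using hw''pre
        rwa [hcl] at this
end Aux

/-- For a well-typed linear λ-term `t`, a variable `x` and a simple type `σ`,
the edges of the tree `t` (an edge is identified with its lower endpoint) can
be partitioned into kept and cut edges such that:
(1) every edge on the tree path from the application node of an `x`-redex of
type `σ` down to the variable node bound by its abstraction is kept — hence
every full `x`-redex of type `σ` lies in a single component of kept edges; and
(2) every application node whose two children are joined to it by kept edges
(i.e. a node with at least two children in its component) is the application
node of an `x`-redex of type `σ` — in particular each component, viewed as a
λ-term with ports at the cut edges, is thin. -/
theorem factorisation_into_thin_blocks {V : Type} [Fintype V] [DecidableEq V]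
    (tyOf : V → Ty) (x : V) (σ : Ty) (t : Tm V)
    (hlin : Linear t) (hty : ∃ τ : Ty, HasTy tyOf t τ) :
    ∃ Cut : List Bool → Prop,
      (∀ (q : List Bool) (M N : Tm V),
        subtermAt t q = some (Tm.app (Tm.lam x M) N) →
        HasTy tyOf (Tm.lam x M) σ →
        ∀ r : List Bool, FreeOccAt x M r →
          ∀ p : List Bool, q <+: p → p <+: (q ++ false :: false :: r) → p ≠ q →
            ¬ Cut p) ∧
      (∀ (p : List Bool) (M N : Tm V),
        subtermAt t p = some (Tm.app M N) →
        ¬ Cut (p ++ [false]) → ¬ Cut (p ++ [true]) →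
        ∃ M' : Tm V, M = Tm.lam x M' ∧ HasTy tyOf (Tm.lam x M') σ) := by
  classical
  refine ⟨fun p => ¬ (∃ q M N, subtermAt t q = some (Tm.app (Tm.lam x M) N) ∧
      HasTy tyOf (Tm.lam x M) σ ∧ ∃ r, FreeOccAt x M r ∧ q <+: p ∧
      p <+: q ++ false :: false :: r ∧ p ≠ q), ?_, ?_⟩
  · intro q M N hq htyM r hr p h1 h2 h3 hc
    exact hc ⟨q, M, N, hq, htyM, r, hr, h1, h2, h3⟩
  · intro p M₁ N₁ hsub hkf hkt
    obtain ⟨q, M, N, hq, htyM, r, hr, hpre1, hpre2, hpne⟩ := not_not.mp hkt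
    obtain ⟨q', M', N', hq', htyM', r', hr', hpre1', hpre2', hpne'⟩ := not_not.mp hkf
    have hlamM : subtermAt t (q ++ [false]) = some (Tm.lam x M) := by
      rw [subtermAt_append, hq]; simp [subtermAt]
    have hM : subtermAt t (q ++ [false, false]) = some M := by
      rw [subtermAt_append, hq]; simp [subtermAt]
    have hlamM' : subtermAt t (q' ++ [false]) = some (Tm.lam x M') := by
      rw [subtermAt_append, hq']; simp [subtermAt]
    have hM' : subtermAt t (q' ++ [false, false]) = some M' := by
      rw [subtermAt_append, hq']; simp [subtermAt]
    rcases path_decomp hpre1 hpre2 hpne with ⟨_, hc⟩ | ⟨_, hc⟩ | ⟨r₃, hp, hrp⟩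
    · cases hc
    · cases hc
    rcases path_decomp hpre1' hpre2' hpne' with ⟨rfl, _⟩ | ⟨hp', _⟩ | ⟨s₃, hp', hsp⟩
    · -- p is itself the application node of an x-redex of type σ
      have := Option.some.inj (hsub.symm.trans hq')
      injection this with h1 h2
      exact ⟨M', h1, htyM'⟩
    · -- impossible: the node p would be a λ-node
      rw [hp'] at hsub
      rw [hlamM'] at hsub
      simp at hsub
    · -- both children of p lie strictly inside redex bodies
      have hpa : (q ++ [false, false]) <+: p := ⟨r₃, by simp [hp]⟩
      have hpb : (q' ++ [false, false]) <+: p := ⟨s₃, by simp [hp']⟩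
      have hr₃ : r₃ <+: r := ((r₃.prefix_append [true]).trans hrp)
      have hs₃ : s₃ <+: r' := ((s₃.prefix_append [false]).trans hsp)
      have hr₃lt : r₃.length < r.length := by
        have := hrp.length_le; simp at this; omega
      have hs₃lt : s₃.length < r'.length := by
        have := hsp.length_le; simp at this; omega
      rcases Nat.lt_trichotomy q.length q'.length with hlt | heq | hgt
      · -- λx of the q'-redex lies strictly above the occurrence r inside M
        have hab : (q ++ [false, false]) <+: (q' ++ [false]) := by
          refine List.prefix_of_prefix_length_le hpa ?_ (by simp; omega)
          exact ((q' ++ [false]).prefix_append [false]).trans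
            (by simpa using hpb)
        obtain ⟨u, hu⟩ := hab
        have hplen : q'.length + 1 ≤ p.length := by
          have : (q' ++ [false]) <+: p :=
            ((q' ++ [false]).prefix_append [false]).trans (by simpa using hpb)
          have := this.length_le; simpa using this
        have hpl := congrArg List.length hp
        have hul := congrArg List.length hu
        simp at hpl hul
        have hulen : u.length < r.length := by omega
        have hA : (q' ++ [false]) <+: p :=
          ((q' ++ [false]).prefix_append [false]).trans (by simpa using hpb)
        have hB : p <+: (q ++ [false, false]) ++ r := by
          rw [hp]
          simpa using (List.prefix_append_right_inj (q ++ [false, false])).mpr hr₃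
        have hur : u <+: r := by
          have h1 : (q ++ [false, false]) ++ u <+: (q ++ [false, false]) ++ r := by
            rw [hu]; exact hA.trans hB
          exact (List.prefix_append_right_inj _).mp h1
        have hune : u ≠ r := fun h => by rw [h] at hulen; omega
        have hMu : subtermAt M u = some (Tm.lam x M') := by
          have h := subtermAt_append t (q ++ [false, false]) u
          rw [hu, hlamM', hM] at h
          simpa using h.symm
        exact absurd hMu (hr.2 u hur hune M')
      · -- the two redexes coincide: two occurrences of x in M, contradiction
        have hab : (q ++ [false, false]) = (q' ++ [false, false]) := by
          have h1 : (q ++ [false, false]) <+: (q' ++ [false, false]) :=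
            List.prefix_of_prefix_length_le hpa hpb (by simp [heq])
          exact h1.sublist.eq_of_length (by simp [heq])
        have hqq : q = q' := (List.append_inj' hab rfl).1
        subst hqq
        have hMM : M = M' := by
          have h := hq.symm.trans hq'
          simp only [Option.some.injEq, Tm.app.injEq, Tm.lam.injEq] at h
          exact h.1.2
        subst hMM
        have hre : r₃ = s₃ := by
          have := hp.symm.trans hp'
          simpa using this
        subst hre
        have hrne : r ≠ r' := by
          intro hrr
          subst hrr
          have h1 : r₃ ++ [true] <+: r₃ ++ [false] :=
            List.prefix_of_prefix_length_le hrp hsp (by simp)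
          have h2 := h1.sublist.eq_of_length (by simp)
          simp at h2
        have h2c := two_le_freeCount hr hr' hrne
        have h1c := hlin.2 (q ++ [false]) x M hlamM
        omega
      · -- symmetric: λx of the q-redex lies strictly above r' inside M'
        have hab : (q' ++ [false, false]) <+: (q ++ [false]) := by
          refine List.prefix_of_prefix_length_le hpb ?_ (by simp; omega)
          exact ((q ++ [false]).prefix_append [false]).trans
            (by simpa using hpa)
        obtain ⟨v, hv⟩ := hab
        have hpl := congrArg List.length hp'
        have hvl := congrArg List.length hv
        have h3 : q.length + 2 ≤ p.length := by
          have := hpa.length_le; simpa using this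
        simp at hpl hvl
        have hvlen : v.length < r'.length := by omega
        have hA : (q ++ [false]) <+: p :=
          ((q ++ [false]).prefix_append [false]).trans (by simpa using hpa)
        have hB : p <+: (q' ++ [false, false]) ++ r' := by
          rw [hp']
          simpa using (List.prefix_append_right_inj (q' ++ [false, false])).mpr hs₃
        have hvr : v <+: r' := by
          have h1 : (q' ++ [false, false]) ++ v <+: (q' ++ [false, false]) ++ r' := by
            rw [hv]; exact hA.trans hB
          exact (List.prefix_append_right_inj _).mp h1
        have hvne : v ≠ r' := fun h => by rw [h] at hvlen; omega
        have hMv : subtermAt M' v = some (Tm.lam x M) := by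
          have h := subtermAt_append t (q' ++ [false, false]) v
          rw [hv, hlamM, hM'] at h
          simpa using h.symm
        exact absurd hMv (hr'.2 v hvr hvne M)
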